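/- A quiver Q is left rooted (i.e., V_λ = Q_0 for some ordinal λ, where {V_α} is the transfinite sequence defined above) if and only if there exists no infinite sequence of composable arrows ⋯ → • → • → • in Q. -/

import Mathlib

section aux

variable {Q₀ : Type u} [Quiver.{u + 1} Q₀] (V : Ordinal.{u} → Set Q₀)
    (h0 : V 0 = ∅)
    (hsucc : ∀ β : Ordinal, V (Order.succ β) =
      {i : Q₀ | ∀ (j : Q₀), (j ⟶ i) → j ∈ ⋃ γ ∈ Set.Iic β, V γ})
    (hlim : ∀ α : Ordinal, Order.IsSuccLimit α → V α = ⋃ β ∈ Set.Iio α, V β)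

include h0 hsucc hlim in
lemma auxL : ∀ γ : Ordinal, ∀ i ∈ V γ, ∀ j : Q₀, (j ⟶ i) → ∃ γ' < γ, j ∈ V γ' := by
  intro γ
  induction γ using Ordinal.induction with
  | _ γ IH =>
    intro i hi j hji
    rcases Ordinal.zero_or_succ_or_isSuccLimit γ with h | ⟨ε, rfl⟩ | h
    · subst h; rw [h0] at hi; exact absurd hi (Set.notMem_empty i)
    · rw [hsucc] at hi
      have := hi j hji
      rw [Set.mem_iUnion₂] at this
      obtain ⟨γ', hle, hmem⟩ := this
      exact ⟨γ', lt_of_le_of_lt hle (Order.lt_succ ε), hmem⟩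
    · rw [hlim γ h] at hi
      rw [Set.mem_iUnion₂] at hi
      obtain ⟨γ'', hlt, hmem⟩ := hi
      obtain ⟨γ', hγ', hj⟩ := IH γ'' hlt i hmem j hji
      exact ⟨γ', hγ'.trans hlt, hj⟩

include h0 hsucc hlim in
lemma auxM : ∀ α β : Ordinal, β ≤ α → V β ⊆ V α := by
  intro α
  induction α using Ordinal.induction with
  | _ α IH =>
    intro β hβα i hi
    rcases eq_or_lt_of_le hβα with rfl | hlt
    · exact hi
    rcases Ordinal.zero_or_succ_or_isSuccLimit α with h | ⟨ε, rfl⟩ | h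
    · subst h; exact absurd hlt (not_lt_zero (a := β))
    · have hβε : β ≤ ε := Order.lt_succ_iff.mp hlt
      have hi' : i ∈ V ε := IH ε (Order.lt_succ ε) β hβε hi
      rw [hsucc]
      intro j hj
      obtain ⟨γ', hγ', hjm⟩ := auxL V h0 hsucc hlim ε i hi' j hj
      rw [Set.mem_iUnion₂]
      exact ⟨γ', le_of_lt hγ', hjm⟩
    · rw [hlim α h, Set.mem_iUnion₂]
      exact ⟨β, hlt, hi⟩

end aux

/-- A quiver `Q` is left rooted (`V λ = Q₀` for some ordinal `λ`, where `{V α}` is the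
transfinite sequence defined by `V 0 = ∅`, the successor rule and unions at limits)
if and only if there is no infinite sequence `⋯ ⟶ • ⟶ • ⟶ •` of composable arrows in `Q`. -/
theorem stmt2 {Q₀ : Type u} [Quiver.{u + 1} Q₀] (V : Ordinal.{u} → Set Q₀)
    (h0 : V 0 = ∅)
    (hsucc : ∀ β : Ordinal, V (Order.succ β) =
      {i : Q₀ | ∀ (j : Q₀), (j ⟶ i) → j ∈ ⋃ γ ∈ Set.Iic β, V γ})
    (hlim : ∀ α : Ordinal, Order.IsSuccLimit α → V α = ⋃ β ∈ Set.Iio α, V β) :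
    (∃ lam : Ordinal, V lam = Set.univ) ↔
      ¬ ∃ v : ℕ → Q₀, ∀ n : ℕ, Nonempty (v (n + 1) ⟶ v n) := by
  constructor
  · rintro ⟨lam, hlam⟩ ⟨v, hv⟩
    -- rank function: least ordinal γ with v n ∈ V γ
    have hne : ∀ n : ℕ, {γ : Ordinal | v n ∈ V γ}.Nonempty := fun n =>
      ⟨lam, show v n ∈ V lam by rw [hlam]; trivial⟩
    set f : ℕ → Ordinal := fun n => sInf {γ : Ordinal | v n ∈ V γ} with hf
    have hfm : ∀ n, v n ∈ V (f n) := fun n => csInf_mem (hne n)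
    have hdesc : ∀ n, f (n + 1) < f n := by
      intro n
      obtain ⟨a⟩ := hv n
      obtain ⟨γ', hγ', hmem⟩ := auxL V h0 hsucc hlim (f n) (v n) (hfm n) (v (n + 1)) a
      exact lt_of_le_of_lt (csInf_le (OrderBot.bddBelow _) hmem) hγ'
    exact RelEmbedding.not_wellFounded
      (RelEmbedding.natGT f hdesc) Ordinal.lt_wf
  · intro hno
    set r : Q₀ → Q₀ → Prop := fun j i => Nonempty (j ⟶ i) with hr
    have hwf : WellFounded r := by
      by_contra hnwf
      have : ∃ a, ¬ Acc r a := by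
        by_contra h
        push_neg at h
        exact hnwf ⟨h⟩
      obtain ⟨a, ha⟩ := this
      have step : ∀ x : {a // ¬ Acc r a}, ∃ y : {a // ¬ Acc r a}, r y.1 x.1 := by
        rintro ⟨x, hx⟩
        obtain ⟨w, hw1, hw2⟩ := exists_not_acc_lt_of_not_acc hx
        exact ⟨⟨w, hw1⟩, hw2⟩
      choose g hg using step
      refine hno ⟨fun n => (g^[n] ⟨a, ha⟩).1, fun n => ?_⟩
      have : r (g^[n + 1] ⟨a, ha⟩).1 (g^[n] ⟨a, ha⟩).1 := by
        rw [Function.iterate_succ']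
        exact hg _
      exact this
    -- rank argument
    have key : ∀ i : Q₀, i ∈ V (Order.succ ((hwf.apply i).rank)) := by
      intro i
      induction i using hwf.induction with
      | _ i IH =>
        rw [hsucc]
        intro j hj
        rw [Set.mem_iUnion₂]
        refine ⟨Order.succ ((hwf.apply j).rank), ?_, IH j ⟨hj⟩⟩
        exact Order.succ_le_iff.mpr (Acc.rank_lt_of_rel (hwf.apply i) ⟨hj⟩)
    refine ⟨Order.succ (⨆ i : Q₀, (hwf.apply i).rank), ?_⟩
    ext i
    simp only [Set.mem_univ, iff_true]
    refine auxM V h0 hsucc hlim _ _ ?_ (key i)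
    exact Order.succ_le_succ (Ordinal.le_iSup (fun i => (hwf.apply i).rank) i)
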